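/- Let p ≥ 5 be prime and A ⊆ Z_p² = (Z/pZ)² with |A| = 2p+1. Then the restricted sumset A +̂ A = {a₁+a₂ : a₁,a₂ ∈ A, a₁ ≠ a₂} has cardinality at least 4p. -/

import Mathlib

open Finset

/-- The restricted sumset `A +̂ B = {a + b : a ∈ A, b ∈ B, a ≠ b}`. -/
def hadd {G : Type*} [AddCommGroup G] [DecidableEq G] (A B : Finset G) : Finset G :=
  ((A ×ˢ B).filter fun x => x.1 ≠ x.2).image fun x => x.1 + x.2

open scoped Pointwise

section basic
variable {G : Type*} [AddCommGroup G] [DecidableEq G] {A B : Finset G}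

lemma mem_hadd {x : G} : x ∈ hadd A B ↔ ∃ a ∈ A, ∃ b ∈ B, a ≠ b ∧ a + b = x := by
  simp only [hadd, mem_image, mem_filter, mem_product, Prod.exists]
  constructor
  · rintro ⟨a, b, ⟨⟨ha, hb⟩, hne⟩, rfl⟩; exact ⟨a, ha, b, hb, hne, rfl⟩
  · rintro ⟨a, ha, b, hb, hne, rfl⟩; exact ⟨a, b, ⟨⟨ha, hb⟩, hne⟩, rfl⟩

lemma add_mem_hadd {a b : G} (ha : a ∈ A) (hb : b ∈ B) (hne : a ≠ b) : a + b ∈ hadd A B :=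
  mem_hadd.2 ⟨a, ha, b, hb, hne, rfl⟩

lemma hadd_mono {A' B' : Finset G} (hA : A ⊆ A') (hB : B ⊆ B') : hadd A B ⊆ hadd A' B' := by
  intro x hx
  obtain ⟨a, ha, b, hb, hne, rfl⟩ := mem_hadd.1 hx
  exact add_mem_hadd (hA ha) (hB hb) hne

end basic

section cdG
variable {p : ℕ}

/-- Cauchy–Davenport in `(ZMod p)²`. -/
lemma cd_G (hp : p.Prime) {s t : Finset (ZMod p × ZMod p)} (hs : s.Nonempty) (ht : t.Nonempty) :
    min p (s.card + t.card - 1) ≤ (s + t).card := by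
  have hmin : (p : ℕ∞) ≤ AddMonoid.minOrder (ZMod p × ZMod p) := by
    rw [AddMonoid.le_minOrder]
    intro a ha _
    have hdvd : addOrderOf a ∣ p := by
      rw [addOrderOf_dvd_iff_nsmul_eq_zero]
      have h1 : p • a.1 = 0 := by
        simp [nsmul_eq_mul, ZMod.natCast_self]
      have h2 : p • a.2 = 0 := by
        simp [nsmul_eq_mul, ZMod.natCast_self]
      rw [Prod.ext_iff]
      exact ⟨h1, h2⟩
    rcases (Nat.Prime.eq_one_or_self_of_dvd hp _ hdvd) with h | h
    · exfalso; exact ha (AddMonoid.addOrderOf_eq_one_iff.1 h)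
    · exact_mod_cast le_of_eq h.symm
  have hle : ((min p (s.card + t.card - 1) : ℕ) : ℕ∞) ≤ ((s + t).card : ℕ∞) := by
    refine le_trans ?_ (cauchy_davenport_minOrder_add hs ht)
    refine le_inf ?_ ?_
    · exact le_trans (Nat.cast_le.2 (min_le_left _ _)) hmin
    · exact Nat.cast_le.2 (min_le_right _ _)
  exact_mod_cast hle

end cdG

section doubles
variable {p : ℕ}

lemma hadd_self_pos {G : Type*} [AddCommGroup G] [DecidableEq G] {B : Finset G}
    (hB : 2 ≤ B.card) : 1 ≤ (hadd B B).card := by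
  obtain ⟨x, hx, x', hx', hne⟩ := Finset.one_lt_card.1 hB
  exact Finset.card_pos.2 ⟨x + x', add_mem_hadd hx hx' hne⟩

lemma hadd_self_card (hp : p.Prime) {B : Finset (ZMod p × ZMod p)}
    (h3 : 3 ≤ B.card) (hBp : B.card ≤ p) : B.card ≤ (hadd B B).card := by
  obtain ⟨x, hx, x', hx', hne⟩ := Finset.one_lt_card.1 (by omega : 1 < B.card)
  set P : Finset (ZMod p × ZMod p) := (B.erase x).image (x + ·) with hP
  set P' : Finset (ZMod p × ZMod p) := (B.erase x').image (x' + ·) with hP'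
  have hPsub : P ⊆ hadd B B := by
    intro z hz
    obtain ⟨y, hy, rfl⟩ := mem_image.1 hz
    exact add_mem_hadd hx (mem_of_mem_erase hy) (Ne.symm (ne_of_mem_erase hy))
  have hP'sub : P' ⊆ hadd B B := by
    intro z hz
    obtain ⟨y, hy, rfl⟩ := mem_image.1 hz
    exact add_mem_hadd hx' (mem_of_mem_erase hy) (Ne.symm (ne_of_mem_erase hy))
  have hcardP : P.card = B.card - 1 := by
    rw [hP, Finset.card_image_of_injective _ (add_right_injective x), Finset.card_erase_of_mem hx]
  have hcardP' : P'.card = B.card - 1 := by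
    rw [hP', Finset.card_image_of_injective _ (add_right_injective x'),
      Finset.card_erase_of_mem hx']
  by_cases hPP : P = P'
  · -- contradiction via sums
    exfalso
    haveI : Fact p.Prime := ⟨hp⟩
    have hsum : ∑ z ∈ P, z = ∑ z ∈ P', z := by rw [hPP]
    have e1 : ∑ z ∈ P, z = (B.card - 1) • x + (∑ y ∈ B, y - x) := by
      rw [hP, Finset.sum_image (fun a _ b _ h => add_right_injective x h)]
      rw [Finset.sum_add_distrib, Finset.sum_const, Finset.card_erase_of_mem hx,
        Finset.sum_erase_eq_sub hx]
    have e2 : ∑ z ∈ P', z = (B.card - 1) • x' + (∑ y ∈ B, y - x') := by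
      rw [hP', Finset.sum_image (fun a _ b _ h => add_right_injective x' h)]
      rw [Finset.sum_add_distrib, Finset.sum_const, Finset.card_erase_of_mem hx',
        Finset.sum_erase_eq_sub hx']
    rw [e1, e2] at hsum
    have e3 : ∀ y : ZMod p × ZMod p,
        (B.card - 1) • y + (∑ z ∈ B, z - y) = ((B.card - 1) • y - y) + ∑ z ∈ B, z := by
      intro y; abel
    rw [e3 x, e3 x'] at hsum
    have h1 : (B.card - 1) • x - x = (B.card - 1) • x' - x' := add_right_cancel hsum
    have hm : B.card - 1 = (B.card - 2) + 1 := by omega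
    rw [hm, succ_nsmul, succ_nsmul, add_sub_cancel_right, add_sub_cancel_right] at h1
    have key : (B.card - 2) • (x - x') = 0 := by rw [smul_sub, h1, sub_self]
    have hc : ((B.card - 2 : ℕ) : ZMod p) ≠ 0 := by
      intro h0
      rw [ZMod.natCast_eq_zero_iff] at h0
      have := Nat.le_of_dvd (by omega) h0
      omega
    have hx1 : ((B.card - 2 : ℕ) : ZMod p) * (x - x').1 = 0 := by
      have := congrArg Prod.fst key
      simpa [nsmul_eq_mul] using this
    have hx2 : ((B.card - 2 : ℕ) : ZMod p) * (x - x').2 = 0 := by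
      have := congrArg Prod.snd key
      simpa [nsmul_eq_mul] using this
    have : x - x' = 0 := by
      have h1' := (mul_eq_zero.1 hx1).resolve_left hc
      have h2' := (mul_eq_zero.1 hx2).resolve_left hc
      exact Prod.ext h1' h2'
    exact hne (by rwa [sub_eq_zero] at this)
  · have hss : P ⊂ P ∪ P' := by
      refine Finset.ssubset_iff_subset_ne.2 ⟨Finset.subset_union_left, fun h => ?_⟩
      have : P' ⊆ P := h ▸ Finset.subset_union_right
      exact hPP (Finset.eq_of_subset_of_card_le this (by omega)).symm
    have : P.card < (P ∪ P').card := Finset.card_lt_card hss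
    have : B.card ≤ (P ∪ P').card := by omega
    exact le_trans this (Finset.card_le_card (Finset.union_subset hPsub hP'sub))

end doubles

section dirs
variable {p : ℕ} [Fact (p.Prime)]

private def dirHom (p : ℕ) : Option (ZMod p) → ((ZMod p × ZMod p) →+ ZMod p)
  | none => AddMonoidHom.fst _ _
  | some c => AddMonoidHom.mk' (fun v => v.2 - c * v.1) (by
      intro a b
      simp only [Prod.snd_add, Prod.fst_add]
      ring)

lemma dirHom_fiber (d : Option (ZMod p)) (s : ZMod p) :
    (univ.filter fun v : ZMod p × ZMod p => dirHom p d v = s).card = p := by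
  match d with
  | none =>
    have : (univ.filter fun v : ZMod p × ZMod p => dirHom p none v = s)
        = univ.image (fun t : ZMod p => (s, t)) := by
      ext ⟨a, b⟩
      simp only [mem_filter, mem_univ, true_and, mem_image, dirHom, AddMonoidHom.coe_fst]
      constructor
      · intro h; have h' : a = s := (mem_filter.1 h).2; subst h'; exact ⟨b, rfl⟩
      · rintro ⟨t, ht⟩; cases ht; exact mem_filter.2 ⟨mem_univ _, rfl⟩
    rw [this, card_image_of_injective _ (fun a b h => by simpa using h)]
    simp [ZMod.card p]
  | some c =>
    have : (univ.filter fun v : ZMod p × ZMod p => dirHom p (some c) v = s)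
        = univ.image (fun t : ZMod p => (t, s + c * t)) := by
      ext ⟨a, b⟩
      simp only [mem_filter, mem_univ, true_and, mem_image, dirHom, AddMonoidHom.mk'_apply,
        Prod.mk.injEq]
      constructor
      · intro h; exact ⟨a, rfl, by linear_combination -h⟩
      · rintro ⟨t, rfl, h2⟩; linear_combination -h2
    rw [this, card_image_of_injective _ (fun a b h => by simpa using (Prod.ext_iff.1 h).1)]
    simp [ZMod.card p]

lemma dirHom_unique {w : ZMod p × ZMod p} (hw : w ≠ 0) :
    (univ.filter fun d : Option (ZMod p) => dirHom p d w = 0).card = 1 := by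
  rcases eq_or_ne w.1 0 with h1 | h1
  · have h2 : w.2 ≠ 0 := by
      intro h2; exact hw (Prod.ext h1 h2)
    have : (univ.filter fun d : Option (ZMod p) => dirHom p d w = 0) = {none} := by
      ext d
      simp only [mem_filter, mem_univ, true_and, mem_singleton]
      match d with
      | none => simp [dirHom, h1]
      | some c => simp [dirHom, h1, h2]
    rw [this]; rfl
  · have : (univ.filter fun d : Option (ZMod p) => dirHom p d w = 0) = {some (w.2 / w.1)} := by
      ext d
      simp only [mem_filter, mem_univ, true_and, mem_singleton]
      match d with
      | none => simp [dirHom, h1]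
      | some c =>
        simp only [dirHom, AddMonoidHom.mk'_apply, Option.some.injEq]
        constructor
        · intro h
          have : c * w.1 = w.2 := by linear_combination -h
          field_simp [h1]
          linear_combination this
        · rintro rfl
          field_simp
          ring
    rw [this]; rfl

end dirs

section count
variable {p : ℕ} [Fact (p.Prime)]

lemma count_pairs (A : Finset (ZMod p × ZMod p)) (φ : (ZMod p × ZMod p) →+ ZMod p) :
    (A.offDiag.filter fun z => φ z.1 = φ z.2).card
      = ∑ s : ZMod p,
          ((A.filter fun a => φ a = s).card * ((A.filter fun a => φ a = s).card - 1)) := by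
  rw [card_eq_sum_card_fiberwise (f := fun z => φ z.1) (t := univ) (fun z _ => mem_univ _)]
  refine Finset.sum_congr rfl fun s _ => ?_
  have he : ((A.offDiag.filter fun z => φ z.1 = φ z.2).filter (fun z => φ z.1 = s))
       = (A.filter fun a => φ a = s).offDiag := by
    ext z
    simp only [mem_filter, mem_offDiag]
    constructor
    · rintro ⟨⟨⟨h1, h2, h3⟩, h4⟩, h5⟩
      exact ⟨⟨h1, h5⟩, ⟨h2, by rw [← h4]; exact h5⟩, h3⟩
    · rintro ⟨⟨h1, h5⟩, ⟨h2, h6⟩, h3⟩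
      exact ⟨⟨⟨h1, h2, h3⟩, by rw [h5, h6]⟩, h5⟩
  rw [he, Finset.offDiag_card]
  rcases Nat.eq_zero_or_pos (A.filter fun a => φ a = s).card with h0 | h0
  · rw [h0]
  · set n := (A.filter fun a => φ a = s).card
    have : n * (n - 1) = n * n - n := by
      cases n with
      | zero => rfl
      | succ m => simp [Nat.succ_mul, Nat.mul_succ]
    omega

lemma exists_good_dir (hp5 : 5 ≤ p) (A : Finset (ZMod p × ZMod p)) (hA : A.card = 2*p+1) :
    ∃ φ : (ZMod p × ZMod p) →+ ZMod p,
      (∀ s : ZMod p, (univ.filter fun v => φ v = s).card = p) ∧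
      4 * p ≤ ∑ s : ZMod p,
          ((A.filter fun a => φ a = s).card * ((A.filter fun a => φ a = s).card - 1)) := by
  set X : Option (ZMod p) → ℕ := fun d =>
    ∑ s : ZMod p, ((A.filter fun a => dirHom p d a = s).card *
      ((A.filter fun a => dirHom p d a = s).card - 1)) with hX
  have htot : ∑ d : Option (ZMod p), X d = (2*p+1) * (2*p) := by
    have h1 : ∀ d, X d = ∑ z ∈ A.offDiag, (if dirHom p d z.1 = dirHom p d z.2 then 1 else 0) := by
      intro d
      rw [hX]
      simp only
      rw [← count_pairs A (dirHom p d), card_filter]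
    rw [Finset.sum_congr rfl fun d _ => h1 d, Finset.sum_comm]
    have h2 : ∀ z ∈ A.offDiag,
        (∑ d : Option (ZMod p), if dirHom p d z.1 = dirHom p d z.2 then 1 else 0) = 1 := by
      intro z hz
      have hzne : z.1 - z.2 ≠ 0 := by
        rw [sub_ne_zero]
        exact (Finset.mem_offDiag.1 hz).2.2
      rw [← card_filter]
      have : (univ.filter fun d : Option (ZMod p) => dirHom p d z.1 = dirHom p d z.2)
          = (univ.filter fun d : Option (ZMod p) => dirHom p d (z.1 - z.2) = 0) := by
        refine filter_congr fun d _ => ?_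
        rw [map_sub, sub_eq_zero]
      rw [this, dirHom_unique hzne]
    rw [Finset.sum_congr rfl h2, Finset.sum_const, smul_eq_mul, mul_one, Finset.offDiag_card, hA]
    ring_nf
    omega
  have heven : ∀ d, Even (X d) := by
    intro d
    refine Finset.even_sum _ fun s _ => ?_
    set n := (A.filter fun a => dirHom p d a = s).card
    cases n with
    | zero => exact ⟨0, rfl⟩
    | succ m => simpa [Nat.succ_sub_one, Nat.succ_mul, mul_comm] using Nat.even_mul_succ_self m
  by_contra hcon
  push_neg at hcon
  have hlt : ∀ d : Option (ZMod p), X d ≤ 4 * p - 2 := by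
    intro d
    have h4 : X d < 4 * p := hcon (dirHom p d) (fun s => dirHom_fiber d s)
    obtain ⟨m, hm⟩ := heven d
    omega
  have hsum : ∑ d : Option (ZMod p), X d ≤ (p + 1) * (4 * p - 2) := by
    calc ∑ d : Option (ZMod p), X d ≤ ∑ _d : Option (ZMod p), (4*p-2) :=
          Finset.sum_le_sum fun d _ => hlt d
      _ = (p+1) * (4*p-2) := by
          rw [Finset.sum_const, smul_eq_mul]
          congr 1
          simp [Fintype.card_option, ZMod.card p]
  rw [htot] at hsum
  have hy : (4*p-2) + 2 = 4*p := by omega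
  have e1 : (p+1) * ((4*p-2)+2) = (p+1)*(4*p-2) + (2*p+2) := by ring
  rw [hy] at e1
  have e2 : (2*p+1)*(2*p) = 4*(p*p) + 2*p := by ring
  have e3 : (p+1)*(4*p) = 4*(p*p) + 4*p := by ring
  omega

lemma arith (p M : ℕ) (k U : ℕ → ℕ) (hp5 : 5 ≤ p)
    (hanti : ∀ a b, a ≤ b → k b ≤ k a)
    (hM1 : 1 ≤ M) (hMp : M ≤ p)
    (hkM : 1 ≤ k M) (hk0 : ∀ ℓ, M < ℓ → k ℓ = 0)
    (hsum : ∑ ℓ ∈ Icc 1 p, k ℓ = 2*p+1)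
    (hk1 : k 1 ≤ p)
    (hmom : 2*p ≤ ∑ ℓ ∈ Icc 1 p, (ℓ-1) * k ℓ)
    (hU : ∀ j ℓ ℓ', 1 ≤ j → j ≤ p → 1 ≤ ℓ' → ℓ' ≤ ℓ → ℓ ≤ M → ℓ + ℓ' = j + 1 →
      min p (k ℓ + k ℓ' - 1) ≤ U j +
        (if p + 2 ≤ k ℓ + k ℓ' then 0 else k ℓ - k (if j ≤ 2 then j+1 else j))) :
    4 * p ≤ ∑ j ∈ Icc 1 p, U j := by
  -- rewrite Icc as Ioc
  have hIcc : ∀ (a b : ℕ), Icc (a+1) b = Ioc a b := fun a b => Finset.Icc_add_one_left_eq_Ioc (a := a) (b := b)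
  rw [show (1 : ℕ) = 0 + 1 by rfl, hIcc] at hsum hmom ⊢
  norm_num at hsum hmom
  -- basic facts
  have hkpos : ∀ ℓ, 1 ≤ ℓ → ℓ ≤ M → 1 ≤ k ℓ := fun ℓ h1 h2 => le_trans hkM (hanti ℓ M h2)
  have hkle1 : ∀ ℓ, 1 ≤ ℓ → k ℓ ≤ k 1 := fun ℓ h1 => hanti 1 ℓ h1
  -- sum splits
  have hsplit : ∀ a b : ℕ, a ≤ b → b ≤ p →
      ∑ ℓ ∈ Ioc 0 p, k ℓ = (∑ ℓ ∈ Ioc 0 a, k ℓ) + (∑ ℓ ∈ Ioc a b, k ℓ) + ∑ ℓ ∈ Ioc b p, k ℓ := by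
    intro a b hab hbp
    rw [← sum_Ioc_consecutive k (Nat.zero_le b) hbp, ← sum_Ioc_consecutive k (Nat.zero_le a) hab]
  have htail0 : ∀ a, M ≤ a → ∑ ℓ ∈ Ioc a p, k ℓ = 0 := by
    intro a ha
    refine Finset.sum_eq_zero fun ℓ hℓ => hk0 ℓ ?_
    have := (mem_Ioc.1 hℓ).1
    omega
  have hsum2 : ∀ b, M ≤ b → b ≤ p → ∑ ℓ ∈ Ioc 0 b, k ℓ = 2*p+1 := by
    intro b hMb hbp
    have h1 := sum_Ioc_consecutive k (Nat.zero_le b) hbp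
    have h2 := htail0 b hMb
    omega
  have hsumM : ∑ ℓ ∈ Ioc 0 M, k ℓ = 2*p+1 := hsum2 M le_rfl hMp
  -- upper bound on partial sums
  have hub : ∀ a b : ℕ, ∑ ℓ ∈ Ioc a b, k ℓ ≤ (b - a) * k (a+1) := by
    intro a b
    calc ∑ ℓ ∈ Ioc a b, k ℓ ≤ (Ioc a b).card • k (a+1) := by
          refine Finset.sum_le_card_nsmul _ _ _ fun x hx => ?_
          exact hanti (a+1) x (mem_Ioc.1 hx).1
      _ = (b - a) * k (a+1) := by rw [Nat.card_Ioc, smul_eq_mul]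
  have hlb : ∀ a b : ℕ, (b - a) * k b ≤ ∑ ℓ ∈ Ioc a b, k ℓ := by
    intro a b
    calc (b - a) * k b = (Ioc a b).card • k b := by rw [Nat.card_Ioc, smul_eq_mul]
      _ ≤ ∑ ℓ ∈ Ioc a b, k ℓ := by
          refine Finset.card_nsmul_le_sum _ _ _ fun x hx => ?_
          exact hanti x b (mem_Ioc.1 hx).2
  -- k 1 ≥ 3 and M ≥ 3
  have hM3 : 3 ≤ M ∧ 3 ≤ k 1 := by
    constructor
    · by_contra h
      have h2 : M ≤ 2 := by omega
      have := hsum2 2 h2 (by omega)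
      have h3 := hub 0 2
      norm_num at h3
      have h4 := hkle1 1 le_rfl
      omega
    · by_contra h
      have h3 := hub 0 M
      norm_num at h3
      have : M * k 1 ≤ p * 2 := by
        calc M * k 1 ≤ p * k 1 := Nat.mul_le_mul_right _ hMp
          _ ≤ p * 2 := Nat.mul_le_mul_left _ (by omega)
      omega
  obtain ⟨hM3, hk13⟩ := hM3
  -- pointwise bounds
  have hHead1 : min p (k 1 + k 1 - 1) ≤ U 1 + (k 1 - k 2) := by
    have := hU 1 1 1 le_rfl (by omega) le_rfl le_rfl (by omega) rfl
    split at this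
    · omega
    · simpa using this
  have hHead1' : p + 2 ≤ k 1 + k 1 → p ≤ U 1 := by
    intro hcap
    have := hU 1 1 1 le_rfl (by omega) le_rfl le_rfl (by omega) rfl
    rw [if_pos hcap] at this
    have hmin : min p (k 1 + k 1 - 1) = p := min_eq_left (by omega)
    omega
  have hHead2 : min p (k 2 + k 1 - 1) ≤ U 2 + (k 2 - k 3) := by
    have := hU 2 2 1 (by omega) (by omega) le_rfl (by omega) (by omega) rfl
    split at this
    · omega
    · simpa using this
  have hHead2' : p + 2 ≤ k 2 + k 1 → p ≤ U 2 := by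
    intro hcap
    have := hU 2 2 1 (by omega) (by omega) le_rfl (by omega) (by omega) rfl
    rw [if_pos hcap] at this
    have hmin : min p (k 2 + k 1 - 1) = p := min_eq_left (by omega)
    omega
  have hHead3 : ∀ j, 3 ≤ j → j ≤ M → min p (k j + k 1 - 1) ≤ U j := by
    intro j h3 hjM
    have := hU j j 1 (by omega) (by omega) le_rfl (by omega) hjM rfl
    rw [if_neg (by omega : ¬ j ≤ 2)] at this
    split at this
    · omega
    · omega
  have hTailLB : ∀ i, 2 ≤ i → i ≤ M → M + i - 1 ≤ p → k i - 1 ≤ U (M + i - 1) := by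
    intro i h2 hiM hip
    have hji : M + i = (M + i - 1) + 1 := by omega
    have hkj0 : k (M + i - 1) = 0 := hk0 _ (by omega)
    have := hU (M+i-1) M i (by omega) hip (by omega) hiM le_rfl hji
    rw [if_neg (by omega : ¬ M + i - 1 ≤ 2)] at this
    have hkiM : k i ≤ k 1 := hkle1 i (by omega)
    split at this
    · have hmin : min p (k M + k i - 1) = p := min_eq_left (by omega)
      omega
    · have hmin : min p (k M + k i - 1) = k M + k i - 1 := min_eq_right (by omega)
      omega
  have hTailP : ∀ i, 2 ≤ i → i ≤ M → M + i - 1 ≤ p → p + 2 ≤ k M + k i →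
      p ≤ U (M + i - 1) := by
    intro i h2 hiM hip hcap
    have hji : M + i = (M + i - 1) + 1 := by omega
    have hkj0 : k (M + i - 1) = 0 := hk0 _ (by omega)
    have := hU (M+i-1) M i (by omega) hip (by omega) hiM le_rfl hji
    rw [if_neg (by omega : ¬ M + i - 1 ≤ 2), if_pos hcap] at this
    have hmin : min p (k M + k i - 1) = p := min_eq_left (by omega)
    omega
  -- main sum splits for U
  have hUsplit : (∑ j ∈ Ioc 0 2, U j) + (∑ j ∈ Ioc 2 M, U j) + (∑ j ∈ Ioc M p, U j)
      = ∑ j ∈ Ioc 0 p, U j := by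
    rw [sum_Ioc_consecutive _ (by omega : (0:ℕ) ≤ 2) (by omega : 2 ≤ M)]
    rw [sum_Ioc_consecutive _ (by omega : (0:ℕ) ≤ M) hMp]
  have hU12 : ∑ j ∈ Ioc 0 2, U j = U 1 + U 2 := by
    have : Ioc (0:ℕ) 2 = {1, 2} := by decide
    rw [this]
    rw [Finset.sum_insert (by decide), Finset.sum_singleton]
  -- tail sum lower bound via reindexing
  have htailsum : ∀ E, M ≤ E → E ≤ p → E ≤ 2*M-1 →
      (∑ i ∈ Ioc 1 (E+1-M), (k i - 1)) ≤ ∑ j ∈ Ioc M E, U j := by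
    intro E hME hEp hE2M
    have hre : ∑ j ∈ Ioc M E, (k (j+1-M) - 1) = ∑ i ∈ Ioc 1 (E+1-M), (k i - 1) := by
      refine Finset.sum_nbij' (fun j => j+1-M) (fun i => M+i-1) ?_ ?_ ?_ ?_ ?_
      · intro j hj; simp only [mem_Ioc] at hj ⊢; omega
      · intro i hi; simp only [mem_Ioc] at hi ⊢; omega
      · intro j hj; simp only [mem_Ioc] at hj; show M + (j+1-M) - 1 = j; omega
      · intro i hi; simp only [mem_Ioc] at hi; show (M+i-1) + 1 - M = i; omega
      · intro j hj; rfl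
    rw [← hre]
    refine Finset.sum_le_sum fun j hj => ?_
    simp only [mem_Ioc] at hj
    have h2 := hTailLB (j+1-M) (by omega) (by omega) (by omega)
    rwa [show M + (j+1-M) - 1 = j by omega] at h2
  -- sum of (k i - 1) identities
  have hsub1 : ∀ a b : ℕ, b ≤ M → (∑ i ∈ Ioc a b, (k i - 1)) + (b - a) = ∑ i ∈ Ioc a b, k i := by
    intro a b hbM
    rcases le_or_gt a b with hab | hab
    · have : ∑ i ∈ Ioc a b, k i = ∑ i ∈ Ioc a b, ((k i - 1) + 1) := by
        refine Finset.sum_congr rfl fun i hi => ?_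
        have := hkpos i (by simp only [mem_Ioc] at hi; omega) (by simp only [mem_Ioc] at hi; omega)
        omega
      rw [this, Finset.sum_add_distrib, Finset.sum_const, Nat.card_Ioc, smul_eq_mul, mul_one]
    · rw [Finset.Ioc_eq_empty (by omega)]
      simp
      omega
  -- head sum over Ioc 2 M (only valid when uncapped at level 3)
  have hheadsum : k 1 + k 3 ≤ p + 1 →
      (M - 2) * (k 1 - 1) + (∑ j ∈ Ioc 2 M, k j) ≤ ∑ j ∈ Ioc 2 M, U j := by
    intro hnc
    have hpt : ∀ j ∈ Ioc 2 M, (k 1 - 1) + k j ≤ U j := by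
      intro j hj
      simp only [mem_Ioc] at hj
      have h1 := hHead3 j (by omega) hj.2
      have h2 : k j ≤ k 3 := hanti 3 j (by omega)
      have h3 := hkpos j (by omega) hj.2
      rw [min_eq_right (by omega)] at h1
      omega
    calc (M - 2) * (k 1 - 1) + (∑ j ∈ Ioc 2 M, k j)
        = ∑ j ∈ Ioc 2 M, ((k 1 - 1) + k j) := by
          rw [Finset.sum_add_distrib, Finset.sum_const, Nat.card_Ioc, smul_eq_mul]
      _ ≤ ∑ j ∈ Ioc 2 M, U j := Finset.sum_le_sum hpt
  have hsum2M : ∑ j ∈ Ioc 2 M, k j = 2*p+1 - k 1 - k 2 := by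
    have h1 := hsplit 2 M (by omega) hMp
    have h2 := htail0 M le_rfl
    have h3 : ∑ ℓ ∈ Ioc 0 2, k ℓ = k 1 + k 2 := by
      have : Ioc (0:ℕ) 2 = {1, 2} := by decide
      rw [this, Finset.sum_insert (by decide), Finset.sum_singleton]
    have hk2le : k 2 ≤ k 1 := hkle1 2 (by omega)
    omega
  -- derived bounds for the uncapped regime
  have hU1B : k 1 + k 2 ≤ p + 1 → k 1 + k 2 - 1 ≤ U 1 := by
    intro hnc
    by_cases hcap : p + 2 ≤ k 1 + k 1
    · have := hHead1' hcap
      have := hkle1 2 (by omega)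
      omega
    · have hm : min p (k 1 + k 1 - 1) = k 1 + k 1 - 1 := min_eq_right (by omega)
      have := hkle1 2 (by omega)
      omega
  have hU2B : k 1 + k 2 ≤ p + 1 → k 1 + k 3 - 1 ≤ U 2 := by
    intro hnc
    have hm : min p (k 2 + k 1 - 1) = k 2 + k 1 - 1 := min_eq_right (by omega)
    have h32 : k 3 ≤ k 2 := hanti 2 3 (by omega)
    omega
  have hsum1M : ∑ j ∈ Ioc 1 M, k j = 2*p+1 - k 1 := by
    have h1 : (∑ j ∈ Ioc 0 1, k j) + ∑ j ∈ Ioc 1 M, k j = ∑ j ∈ Ioc 0 M, k j :=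
      sum_Ioc_consecutive k (by omega) (by omega)
    have h2 : ∑ j ∈ Ioc 0 1, k j = k 1 := by
      rw [show (Ioc 0 1 : Finset ℕ) = {1} from by decide, Finset.sum_singleton]
    omega
  -- case: exactly three occupied slices
  by_cases hc3 : k 1 = 3
  · have h3M : 2*p+1 ≤ 3*M := by
      have h3 := hub 0 M
      norm_num at h3
      rw [hc3] at h3
      omega
    have h2M : p + 1 ≤ 2*M := by omega
    have hku : k (p+1-M) = 3 := by
      by_contra hku
      have hkule : k (p+1-M) ≤ 2 := by
        have := hkle1 (p+1-M) (by omega)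
        omega
      have hs := hsplit (p+1-M-1) M (by omega) hMp
      have hb1 := hub 0 (p+1-M-1)
      norm_num at hb1
      rw [hc3] at hb1
      have hb2 := hub (p+1-M-1) M
      rw [show p+1-M-1+1 = p+1-M from by omega] at hb2
      have hb3 : (M - (p+1-M-1)) * k (p+1-M) ≤ (M - (p+1-M-1)) * 2 :=
        Nat.mul_le_mul_left _ hkule
      have ht := htail0 M le_rfl
      have hM2 : (M - (p+1-M-1)) * 2 = 2*M - 2*(p+1-M-1) := by omega
      omega
    have hk32 : 2 ≤ k 3 := by
      by_contra hk32
      have hs := hsplit 2 M (by omega) hMp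
      have hb0 : ∑ ℓ ∈ Ioc 0 2, k ℓ = k 1 + k 2 := by
        rw [show (Ioc 0 2 : Finset ℕ) = {1, 2} from by decide,
          Finset.sum_insert (by decide), Finset.sum_singleton]
      have hb2 := hub 2 M
      norm_num at hb2
      have hb3 : (M - 2) * k 3 ≤ (M-2) * 1 := Nat.mul_le_mul_left _ (by omega)
      have ht := htail0 M le_rfl
      have := hkle1 2 (by omega)
      omega
    -- assemble
    have hk3le1 : k 3 ≤ k 1 := hkle1 3 (by omega)
    have hh := hheadsum (by omega)
    have hu1 := hU1B (by
      have := hkle1 2 (by omega)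
      omega)
    have hu2 := hU2B (by
      have := hkle1 2 (by omega)
      omega)
    have htail := htailsum p (by omega) le_rfl (by omega)
    have htail2 : 2 * (p+1-M - 1) ≤ ∑ i ∈ Ioc 1 (p+1-M), (k i - 1) := by
      calc 2 * (p+1-M-1) = (Ioc 1 (p+1-M)).card • 2 := by
            rw [Nat.card_Ioc, smul_eq_mul]; ring
        _ ≤ ∑ i ∈ Ioc 1 (p+1-M), (k i - 1) := by
            refine Finset.card_nsmul_le_sum _ _ _ fun i hi => ?_
            simp only [mem_Ioc] at hi
            have : k (p+1-M) ≤ k i := hanti i (p+1-M) hi.2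
            omega
    have hmul : (M-2) * 2 = 2*M - 4 := by omega
    rw [hc3] at hh
    norm_num at hh
    omega
  -- now k 1 ≥ 4
  have hk14 : 4 ≤ k 1 := by omega
  by_cases hcM3 : M = 3
  · -- three layers
    subst hcM3
    have hsum3 : k 1 + k 2 + k 3 = 2*p+1 := by
      have h1 : ∑ ℓ ∈ Ioc 0 3, k ℓ = k 1 + (k 2 + k 3) := by
        rw [show (Ioc 0 3 : Finset ℕ) = {1, 2, 3} from by decide,
          Finset.sum_insert (by decide), Finset.sum_insert (by decide), Finset.sum_singleton]
      have := hsumM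
      omega
    have hmom3 : 2*p ≤ k 2 + 2 * k 3 := by
      have h1 : (∑ ℓ ∈ Ioc 0 3, (ℓ-1) * k ℓ) + ∑ ℓ ∈ Ioc 3 p, (ℓ-1) * k ℓ
          = ∑ ℓ ∈ Ioc 0 p, (ℓ-1) * k ℓ := sum_Ioc_consecutive _ (by omega) (by omega)
      have h2 : ∑ ℓ ∈ Ioc 3 p, (ℓ-1) * k ℓ = 0 := by
        refine Finset.sum_eq_zero fun ℓ hℓ => ?_
        simp only [mem_Ioc] at hℓ
        rw [hk0 ℓ (by omega), Nat.mul_zero]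
      have h3 : ∑ ℓ ∈ Ioc 0 3, (ℓ-1) * k ℓ = k 2 + 2 * k 3 := by
        rw [show (Ioc 0 3 : Finset ℕ) = {1, 2, 3} from by decide,
          Finset.sum_insert (by decide), Finset.sum_insert (by decide), Finset.sum_singleton]
        norm_num
      omega
    have hk2le : k 2 ≤ k 1 := hkle1 2 (by omega)
    have hk3le : k 3 ≤ k 2 := hanti 2 3 (by omega)
    have hk31 : k 1 ≤ k 3 + 1 := by omega
    have hk1p : k 1 ≤ p - 1 := by
      by_contra h
      have h1 : k 1 = p := by omega
      omega
    have hcap13 : p + 2 ≤ k 1 + k 3 := by omega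
    have hu1 : p ≤ U 1 := hHead1' (by omega)
    have hu2 : p ≤ U 2 := hHead2' (by omega)
    have hu3 : p ≤ U 3 := by
      have h1 := hHead3 3 le_rfl le_rfl
      have hm : min p (k 3 + k 1 - 1) = p := min_eq_left (by omega)
      omega
    have hu4 : p ≤ U 4 := by
      have h1 := hTailP 2 le_rfl (by omega) (by omega) (by omega)
      norm_num at h1
      exact h1
    have hsub : (Ioc 0 4 : Finset ℕ) ⊆ Ioc 0 p := by
      intro x hx
      simp only [mem_Ioc] at hx ⊢
      omega
    have h04 : ∑ j ∈ Ioc 0 4, U j = U 1 + (U 2 + (U 3 + U 4)) := by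
      rw [show (Ioc 0 4 : Finset ℕ) = {1, 2, 3, 4} from by decide,
        Finset.sum_insert (by decide), Finset.sum_insert (by decide),
        Finset.sum_insert (by decide), Finset.sum_singleton]
    have hle := Finset.sum_le_sum_of_subset hsub (f := U)
    omega
  have hM4 : 4 ≤ M := by omega
  by_cases hcap : p + 2 ≤ k 1 + k 2
  · -- CASE A
    have hu1 : p ≤ U 1 := hHead1' (by
      have := hkle1 2 (by omega)
      omega)
    have hu2 : p ≤ U 2 := hHead2' (by omega)
    by_cases hMeqp : M = p
    · -- M = p : many heads each at least k 1
      have hheads : (M-2) * k 1 ≤ ∑ j ∈ Ioc 2 M, U j := by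
        calc (M-2) * k 1 = (Ioc 2 M).card • k 1 := by rw [Nat.card_Ioc, smul_eq_mul]
          _ ≤ ∑ j ∈ Ioc 2 M, U j := by
              refine Finset.card_nsmul_le_sum _ _ _ fun j hj => ?_
              simp only [mem_Ioc] at hj
              have h1 := hHead3 j (by omega) hj.2
              have h2 : k 1 ≤ min p (k j + k 1 - 1) := by
                refine le_min hk1 ?_
                have := hkpos j (by omega) hj.2
                omega
              omega
      have hmul : (M-2) * 4 ≤ (M-2) * k 1 := Nat.mul_le_mul_left _ hk14
      have hmul2 : (M-2)*4 = 4*M - 8 := by omega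
      omega
    · -- M ≤ p - 1
      have hMp1 : M ≤ p - 1 := by omega
      by_cases hA1 : p + 2 ≤ k 1 + k 4
      · have hu3 : p ≤ U 3 := by
          have h1 := hHead3 3 le_rfl (by omega)
          have h43 : k 4 ≤ k 3 := hanti 3 4 (by omega)
          have hm : min p (k 3 + k 1 - 1) = p := min_eq_left (by omega)
          omega
        have hu4 : p ≤ U 4 := by
          have h1 := hHead3 4 (by omega) (by omega)
          have hm : min p (k 4 + k 1 - 1) = p := min_eq_left (by omega)
          omega
        have hsub : (Ioc 0 4 : Finset ℕ) ⊆ Ioc 0 p := by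
          intro x hx
          simp only [mem_Ioc] at hx ⊢
          omega
        have h04 : ∑ j ∈ Ioc 0 4, U j = U 1 + (U 2 + (U 3 + U 4)) := by
          rw [show (Ioc 0 4 : Finset ℕ) = {1, 2, 3, 4} from by decide,
            Finset.sum_insert (by decide), Finset.sum_insert (by decide),
            Finset.sum_insert (by decide), Finset.sum_singleton]
        have hle := Finset.sum_le_sum_of_subset hsub (f := U)
        omega
      · have hM1U : k 2 - 1 ≤ U (M+1) := by
          have h1 := hTailLB 2 le_rfl (by omega) (by omega)
          rwa [show M + 2 - 1 = M + 1 from by omega] at h1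
        have hM1mem : M+1 ∈ Ioc M p := by
          simp only [mem_Ioc]
          omega
        have htailone : U (M+1) ≤ ∑ j ∈ Ioc M p, U j :=
          Finset.single_le_sum (fun i _ => Nat.zero_le _) hM1mem
        by_cases hA2 : p + 2 ≤ k 1 + k 3
        · have hu3 : p ≤ U 3 := by
            have h1 := hHead3 3 le_rfl (by omega)
            have hm : min p (k 3 + k 1 - 1) = p := min_eq_left (by omega)
            omega
          have hu4 : k 1 ≤ U 4 := by
            have h1 := hHead3 4 (by omega) (by omega)
            have h2 : k 1 ≤ min p (k 4 + k 1 - 1) := by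
              refine le_min hk1 ?_
              have := hkpos 4 (by omega) (by omega)
              omega
            omega
          -- sum over {3, 4} within Ioc 2 M
          have hsub34 : ({3, 4} : Finset ℕ) ⊆ Ioc 2 M := by
            intro x hx
            simp only [Finset.mem_insert, Finset.mem_singleton] at hx
            simp only [mem_Ioc]
            omega
          have h34 : ∑ j ∈ ({3, 4} : Finset ℕ), U j = U 3 + U 4 := by
            rw [Finset.sum_insert (by decide), Finset.sum_singleton]
          have hle34 := Finset.sum_le_sum_of_subset hsub34 (f := U)
          have hk2p : p + 1 ≤ k 1 + k 2 - 1 := by omega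
          omega
        · -- A3
          have hh := hheadsum (by omega)
          have hmul : 2*(k 1 - 1) ≤ (M-2) * (k 1 -1) := Nat.mul_le_mul_right _ (by omega)
          omega
  · -- CASE B
    have hu1 := hU1B (by omega)
    have hu2 := hU2B (by omega)
    have hk3le2 : k 3 ≤ k 2 := hanti 2 3 (by omega)
    have hh := hheadsum (by omega)
    have hk3pos : 1 ≤ k 3 := hkpos 3 (by omega) (by omega)
    by_cases hMeqp : M = p
    · have hmul : (M-2)*3 ≤ (M-2) * (k 1 - 1) := Nat.mul_le_mul_left _ (by omega)
      have hmul2 : (M-2)*3 = 3*M-6 := by omega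
      omega
    · have hMp1 : M ≤ p - 1 := by omega
      by_cases hBII : 2*M - 1 ≤ p
      · -- B-II : all tails available
        have htail := htailsum (2*M-1) (by omega) hBII (le_rfl)
        rw [show 2*M-1+1-M = M from by omega] at htail
        have hs1 := hsub1 1 M le_rfl
        have htmono : ∑ j ∈ Ioc M (2*M-1), U j ≤ ∑ j ∈ Ioc M p, U j := by
          refine Finset.sum_le_sum_of_subset ?_
          intro x hx
          simp only [mem_Ioc] at hx ⊢
          omega
        have hmul : (M-2)*1 ≤ (M-2) * (k 1 - 1) := Nat.mul_le_mul_left _ (by omega)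
        omega
      · -- B-III
        have h2M : p + 2 ≤ 2*M := by omega
        have htail := htailsum p (by omega) le_rfl (by omega)
        by_cases hc4 : k 1 = 4
        · have hku2 : 2 ≤ k (p+1-M) := by
            by_contra hku
            have hs := hsplit (p+1-M-1) M (by omega) hMp
            have hb1 := hub 0 (p+1-M-1)
            norm_num at hb1
            rw [hc4] at hb1
            have hb2 := hub (p+1-M-1) M
            rw [show p+1-M-1+1 = p+1-M from by omega] at hb2
            have hb3 : (M - (p+1-M-1)) * k (p+1-M) ≤ (M - (p+1-M-1)) * 1 :=
              Nat.mul_le_mul_left _ (by omega)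
            have ht := htail0 M le_rfl
            omega
          have htail2 : (p+1-M-1) * 1 ≤ ∑ i ∈ Ioc 1 (p+1-M), (k i - 1) := by
            calc (p+1-M-1) * 1 = (Ioc 1 (p+1-M)).card • 1 := by
                  rw [Nat.card_Ioc, smul_eq_mul]
              _ ≤ ∑ i ∈ Ioc 1 (p+1-M), (k i - 1) := by
                  refine Finset.card_nsmul_le_sum _ _ _ fun i hi => ?_
                  simp only [mem_Ioc] at hi
                  have : k (p+1-M) ≤ k i := hanti i (p+1-M) hi.2
                  omega
          rw [hc4] at hh
          norm_num at hh
          have hmul : (M-2)*3 = 3*M-6 := by omega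
          omega
        · have hk15 : 5 ≤ k 1 := by omega
          have hmul : (M-2)*4 ≤ (M-2) * (k 1 - 1) := Nat.mul_le_mul_left _ (by omega)
          have hmul2 : (M-2)*4 = 4*M-8 := by omega
          omega

section key
variable {p : ℕ}

lemma key [NeZero p] (hp : p.Prime) (h5 : 5 ≤ p) (A : Finset (ZMod p × ZMod p)) (hA : A.card = 2*p+1)
    (φ : (ZMod p × ZMod p) →+ ZMod p)
    (hfib : ∀ s : ZMod p, (univ.filter fun v => φ v = s).card = p)
    (hmom : 4 * p ≤ ∑ s : ZMod p,
      ((A.filter fun a => φ a = s).card * ((A.filter fun a => φ a = s).card - 1))) :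
    4 * p ≤ (hadd A A).card := by
  haveI : Fact p.Prime := ⟨hp⟩
  set R := hadd A A with hR
  set n : ZMod p → ℕ := fun s => (A.filter fun a => φ a = s).card with hn
  have hnp : ∀ s, n s ≤ p := by
    intro s
    rw [← hfib s]
    exact card_le_card (fun a ha => mem_filter.2 ⟨mem_univ _, (mem_filter.1 ha).2⟩)
  set Sl : ℕ → Finset (ZMod p) := fun ℓ => univ.filter fun s => ℓ ≤ n s with hSl
  set k : ℕ → ℕ := fun ℓ => (Sl ℓ).card with hk
  set M : ℕ := univ.sup n with hM
  set U : ℕ → ℕ := fun j =>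
    (univ.filter fun t : ZMod p => j ≤ (R.filter fun r => φ r = t).card).card with hU
  -- slice facts
  have hslice_sum : ∑ s : ZMod p, n s = 2*p+1 := by
    rw [← hA]
    exact (card_eq_sum_card_fiberwise (fun a _ => mem_univ (φ a))).symm
  have hanti : ∀ a b, a ≤ b → k b ≤ k a := by
    intro a b hab
    exact card_le_card (fun s hs => mem_filter.2 ⟨mem_univ _, le_trans hab (mem_filter.1 hs).2⟩)
  have hM1 : 1 ≤ M := by
    have hAn : A.Nonempty := card_pos.1 (by omega)
    obtain ⟨a, ha⟩ := hAn
    refine le_trans ?_ (Finset.le_sup (mem_univ (φ a)))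
    rw [hn]
    simp only
    exact card_pos.2 ⟨a, mem_filter.2 ⟨ha, rfl⟩⟩
  have hMp : M ≤ p := Finset.sup_le fun s _ => hnp s
  have hkM : 1 ≤ k M := by
    have huniv : (univ : Finset (ZMod p)).Nonempty := univ_nonempty
    obtain ⟨s₀, _, hs₀⟩ := Finset.exists_mem_eq_sup univ huniv n
    exact card_pos.2 ⟨s₀, mem_filter.2 ⟨mem_univ _, le_of_eq hs₀⟩⟩
  have hk0 : ∀ ℓ, M < ℓ → k ℓ = 0 := by
    intro ℓ hℓ
    rw [hk]
    simp only [card_eq_zero]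
    rw [filter_eq_empty_iff]
    intro s _
    have : n s ≤ M := Finset.le_sup (mem_univ s)
    omega
  have hkn : ∀ ℓ, k ℓ = ∑ s : ZMod p, if ℓ ≤ n s then 1 else 0 := by
    intro ℓ; rw [hk]; simp only; rw [card_filter]
  have hsum : ∑ ℓ ∈ Icc 1 p, k ℓ = 2*p+1 := by
    rw [Finset.sum_congr rfl fun ℓ _ => hkn ℓ, Finset.sum_comm]
    rw [← hslice_sum]
    refine Finset.sum_congr rfl fun s _ => ?_
    rw [← card_filter]
    have : (Icc 1 p).filter (fun ℓ => ℓ ≤ n s) = Icc 1 (n s) := by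
      ext ℓ
      simp only [mem_filter, mem_Icc]
      have := hnp s
      omega
    rw [this, Nat.card_Icc]
    omega
  have hk1 : k 1 ≤ p := by
    rw [hk]
    simp only
    calc (univ.filter fun s => 1 ≤ n s).card ≤ (univ : Finset (ZMod p)).card := card_le_card
          (filter_subset _ _)
      _ = p := ZMod.card p
  have hmom' : 2*p ≤ ∑ ℓ ∈ Icc 1 p, (ℓ-1) * k ℓ := by
    have hgauss : ∀ s : ZMod p, 2 * (∑ ℓ ∈ Icc 1 (n s), (ℓ-1)) = n s * (n s - 1) := by
      intro s
      have h1 : ∑ ℓ ∈ Icc 1 (n s), (ℓ-1) = ∑ i ∈ range (n s), i := by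
        refine Finset.sum_nbij' (fun ℓ => ℓ - 1) (fun i => i + 1) ?_ ?_ ?_ ?_ ?_
        · intro ℓ hℓ; simp only [mem_Icc] at hℓ; simp only [mem_range]; omega
        · intro i hi; simp only [mem_range] at hi; simp only [mem_Icc]; omega
        · intro ℓ hℓ; simp only [mem_Icc] at hℓ; show ℓ - 1 + 1 = ℓ; omega
        · intro i _; show i + 1 - 1 = i; omega
        · intro ℓ _; rfl
      rw [h1, ← Finset.sum_range_id_mul_two (n s)]
      ring
    have hswap : ∑ ℓ ∈ Icc 1 p, (ℓ-1) * k ℓ = ∑ s : ZMod p, ∑ ℓ ∈ Icc 1 (n s), (ℓ-1) := by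
      rw [Finset.sum_congr rfl fun ℓ _ => by rw [hkn ℓ, Finset.mul_sum], Finset.sum_comm]
      refine Finset.sum_congr rfl fun s _ => ?_
      simp only [mul_ite, mul_one, mul_zero]
      rw [← Finset.sum_filter]
      have : (Icc 1 p).filter (fun ℓ => ℓ ≤ n s) = Icc 1 (n s) := by
        ext ℓ
        simp only [mem_filter, mem_Icc]
        have := hnp s
        omega
      rw [this]
    have h2 : 2 * (∑ ℓ ∈ Icc 1 p, (ℓ-1) * k ℓ) = ∑ s : ZMod p, n s * (n s - 1) := by
      rw [hswap, Finset.mul_sum]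
      exact Finset.sum_congr rfl fun s _ => hgauss s
    have hmom2 : 4*p ≤ ∑ s : ZMod p, n s * (n s - 1) := by
      simpa only [hn] using hmom
    omega
  -- F5
  have hF5 : ∑ j ∈ Icc 1 p, U j ≤ R.card := by
    have hUj : ∀ j, U j = ∑ t : ZMod p, if j ≤ (R.filter fun r => φ r = t).card then 1 else 0 := by
      intro j; rw [hU]; simp only; rw [card_filter]
    rw [Finset.sum_congr rfl fun j _ => hUj j, Finset.sum_comm]
    have hRsum : R.card = ∑ t : ZMod p, (R.filter fun r => φ r = t).card :=
      card_eq_sum_card_fiberwise (fun r _ => mem_univ (φ r))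
    rw [hRsum]
    refine Finset.sum_le_sum fun t _ => ?_
    rw [← card_filter]
    calc ((Icc 1 p).filter fun j => j ≤ (R.filter fun r => φ r = t).card).card
        ≤ (Icc 1 ((R.filter fun r => φ r = t).card)).card := by
          refine card_le_card fun j hj => ?_
          simp only [mem_filter, mem_Icc] at hj ⊢
          omega
      _ = (R.filter fun r => φ r = t).card := by rw [Nat.card_Icc]; omega
  -- F6
  have hF6 : ∀ j ℓ ℓ', 1 ≤ j → j ≤ p → 1 ≤ ℓ' → ℓ' ≤ ℓ → ℓ ≤ M → ℓ + ℓ' = j + 1 →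
      min p (k ℓ + k ℓ' - 1) ≤ U j +
        (if p + 2 ≤ k ℓ + k ℓ' then 0 else k ℓ - k (if j ≤ 2 then j+1 else j)) := by
    intro j ℓ ℓ' hj1 hjp hℓ'1 hℓ'ℓ hℓM hsplit
    have hkℓpos : 1 ≤ k ℓ := le_trans hkM (hanti ℓ M hℓM)
    have hkℓ'pos : 1 ≤ k ℓ' := le_trans hkℓpos (hanti ℓ' ℓ hℓ'ℓ)
    have hSlℓ : (Sl ℓ).Nonempty := card_pos.1 hkℓpos
    have hSlℓ' : (Sl ℓ').Nonempty := card_pos.1 hkℓ'pos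
    have hCD : min p (k ℓ + k ℓ' - 1) ≤ (Sl ℓ' + Sl ℓ).card := by
      have := ZMod.cauchy_davenport hp hSlℓ' hSlℓ
      rwa [Nat.add_comm (k ℓ') (k ℓ)] at this
    set W : Finset (ZMod p) := Sl ℓ' + Sl ℓ with hW
    have hgen : ∀ t : ZMod p, ∀ x y : ZMod p, x ∈ Sl ℓ' → y ∈ Sl ℓ → x ≠ y → x + y = t →
        j ≤ (R.filter fun r => φ r = t).card := by
      intro t x y hx hy hxy hxyt
      have hnx : ℓ' ≤ n x := (mem_filter.1 hx).2
      have hny : ℓ ≤ n y := (mem_filter.1 hy).2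
      have hAx : (A.filter fun a => φ a = x).Nonempty := by
        rw [← card_pos]
        show 0 < n x
        omega
      have hAy : (A.filter fun a => φ a = y).Nonempty := by
        rw [← card_pos]
        show 0 < n y
        omega
      have hsub : (A.filter fun a => φ a = x) + (A.filter fun a => φ a = y)
          ⊆ R.filter fun r => φ r = t := by
        intro r hr
        obtain ⟨a, ha, b, hb, rfl⟩ := Finset.mem_add.1 hr
        obtain ⟨haA, hax⟩ := mem_filter.1 ha
        obtain ⟨hbA, hby⟩ := mem_filter.1 hb
        refine mem_filter.2 ⟨?_, ?_⟩
        · exact add_mem_hadd haA hbA (fun h => hxy (by rw [← hax, ← hby, h]))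
        · rw [map_add, hax, hby, hxyt]
      have hcd2 := cd_G hp hAx hAy
      have hjmin : j ≤ min p ((A.filter fun a => φ a = x).card
          + (A.filter fun a => φ a = y).card - 1) := by
        refine le_min hjp ?_
        show j ≤ n x + n y - 1
        omega
      exact le_trans hjmin (le_trans hcd2 (card_le_card hsub))
    set Good := W.filter (fun t => j ≤ (R.filter fun r => φ r = t).card) with hGoodDef
    set Bad := W.filter (fun t => ¬ j ≤ (R.filter fun r => φ r = t).card) with hBadDef
    have hsplitW : Good.card + Bad.card = W.card := card_filter_add_card_filter_not _
    have hGoodU : Good.card ≤ U j := by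
      refine card_le_card fun t ht => ?_
      exact mem_filter.2 ⟨mem_univ _, (mem_filter.1 ht).2⟩
    by_cases hcap : p + 2 ≤ k ℓ + k ℓ'
    · rw [if_pos hcap]
      have hBadempty : Bad = ∅ := by
        rw [eq_empty_iff_forall_notMem]
        intro t ht
        obtain ⟨htW, htbad⟩ := mem_filter.1 ht
        set T := (Sl ℓ).image (fun y => t - y) with hT
        have hTcard : T.card = k ℓ :=
          card_image_of_injective _ (fun a b h => by
            have h2 : t - a = t - b := h
            have := sub_right_injective h2
            exact this)
        have hup : (Sl ℓ' ∪ T).card ≤ p := by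
          calc (Sl ℓ' ∪ T).card ≤ (univ : Finset (ZMod p)).card := card_le_card (subset_univ _)
            _ = p := ZMod.card p
        have h2' := Finset.card_inter_add_card_union (Sl ℓ') T
        have hw1 : (Sl ℓ').card = k ℓ' := rfl
        have hint : 2 ≤ (Sl ℓ' ∩ T).card := by omega
        obtain ⟨x₁, hx₁, x₂, hx₂, hx12⟩ := Finset.one_lt_card.1 hint
        have hrep : ∀ x ∈ Sl ℓ' ∩ T, x + x = t := by
          intro x hx
          obtain ⟨hxℓ', hxT⟩ := mem_inter.1 hx
          obtain ⟨y, hy, hyx⟩ := mem_image.1 hxT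
          have hxyt : x + y = t := by rw [← hyx]; ring
          rcases eq_or_ne x y with rfl | hne
          · exact hxyt
          · exact absurd (hgen t x y hxℓ' hy hne hxyt) htbad
        have e12 : x₁ + x₁ = x₂ + x₂ := by rw [hrep x₁ hx₁, hrep x₂ hx₂]
        have h2ne : (2 : ZMod p) ≠ 0 := by
          intro h
          have hd := (ZMod.natCast_eq_zero_iff 2 p).1 (by exact_mod_cast h)
          have := Nat.le_of_dvd (by norm_num) hd
          omega
        apply hx12
        have h2eq : (2 : ZMod p) * x₁ = 2 * x₂ := by linear_combination e12
        exact mul_left_cancel₀ h2ne h2eq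
      have hWGood : W.card = Good.card := by
        rw [← hsplitW, hBadempty, card_empty]
        omega
      calc min p (k ℓ + k ℓ' - 1) ≤ W.card := hCD
        _ = Good.card := hWGood
        _ ≤ U j + 0 := by omega
    · rw [if_neg hcap]
      have hBadd : ∀ t ∈ Bad, ∃ s, s ∈ Sl ℓ ∧ t = s + s
          ∧ ¬ ((if j ≤ 2 then j+1 else j) ≤ n s) := by
        intro t ht
        obtain ⟨htW, htbad⟩ := mem_filter.1 ht
        obtain ⟨x, hx, y, hy, hxyt⟩ := Finset.mem_add.1 htW
        have hxy : x = y := by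
          by_contra hne
          exact htbad (hgen t x y hx hy hne hxyt)
        subst hxy
        refine ⟨x, hy, hxyt.symm, ?_⟩
        intro hcon
        have hsub : hadd (A.filter fun a => φ a = x) (A.filter fun a => φ a = x)
            ⊆ R.filter fun r => φ r = t := by
          intro r hr
          obtain ⟨a, ha, b, hb, hne, rfl⟩ := mem_hadd.1 hr
          refine mem_filter.2 ⟨add_mem_hadd (mem_filter.1 ha).1 (mem_filter.1 hb).1 hne, ?_⟩
          rw [map_add, (mem_filter.1 ha).2, (mem_filter.1 hb).2, hxyt]
        have hcard := card_le_card hsub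
        rcases Nat.lt_or_ge j 2 with hj2 | hj2
        · -- j = 1 : n x ≥ 2 gives a nonempty restricted sumset
          have hj1' : j = 1 := by omega
          rw [if_pos (by omega : j ≤ 2)] at hcon
          have h2 : 2 ≤ (A.filter fun a => φ a = x).card := by
            show 2 ≤ n x
            omega
          have := hadd_self_pos h2
          exact htbad (by omega)
        · -- j ≥ 2 : n x ≥ 3 and n x ≥ j
          have h3 : 3 ≤ (A.filter fun a => φ a = x).card := by
            show 3 ≤ n x
            by_cases hj2' : j ≤ 2
            · rw [if_pos hj2'] at hcon; omega
            · rw [if_neg hj2'] at hcon; omega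
          have hjn : j ≤ (A.filter fun a => φ a = x).card := by
            show j ≤ n x
            by_cases hj2' : j ≤ 2
            · rw [if_pos hj2'] at hcon; omega
            · rw [if_neg hj2'] at hcon; omega
          have hDl := hadd_self_card hp h3 (hnp x)
          exact htbad (le_trans hjn (le_trans hDl hcard))
      have hidxℓ : ℓ ≤ (if j ≤ 2 then j+1 else j) := by
        split <;> omega
      have hBadsub : Bad ⊆ ((Sl ℓ) \ (Sl (if j ≤ 2 then j+1 else j))).image (fun s => s + s) := by
        intro t ht
        obtain ⟨s, hs, hts, hns⟩ := hBadd t ht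
        refine mem_image.2 ⟨s, ?_, hts.symm⟩
        refine mem_sdiff.2 ⟨hs, ?_⟩
        intro hmem
        exact hns (mem_filter.1 hmem).2
      have hBadcard : Bad.card ≤ k ℓ - k (if j ≤ 2 then j+1 else j) := by
        have hSlsub : Sl (if j ≤ 2 then j+1 else j) ⊆ Sl ℓ := fun s hs =>
          mem_filter.2 ⟨mem_univ _, le_trans hidxℓ (mem_filter.1 hs).2⟩
        calc Bad.card ≤ (((Sl ℓ) \ (Sl (if j ≤ 2 then j+1 else j))).image
              (fun s => s + s)).card := card_le_card hBadsub
          _ ≤ ((Sl ℓ) \ (Sl (if j ≤ 2 then j+1 else j))).card := card_image_le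
          _ = k ℓ - k (if j ≤ 2 then j+1 else j) := card_sdiff_of_subset hSlsub
      calc min p (k ℓ + k ℓ' - 1) ≤ W.card := hCD
        _ = Good.card + Bad.card := hsplitW.symm
        _ ≤ U j + (k ℓ - k (if j ≤ 2 then j+1 else j)) := by omega
  have := arith p M k U h5 hanti hM1 hMp hkM hk0 hsum hk1 hmom' hF6
  omega

end key


/-- **Main theorem** (Theorem 1.4, lower bound): for `p ≥ 5` prime and
`A ⊆ ℤ_p² = (ℤ/pℤ)²` with `|A| = 2p+1`, the restricted sumset `A +̂ A` has
cardinality at least `4p`. -/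
theorem main_theorem {p : ℕ} (hp : p.Prime) (h5 : 5 ≤ p)
    (A : Finset (ZMod p × ZMod p)) (hA : A.card = 2 * p + 1) :
    4 * p ≤ (hadd A A).card := by
  haveI : Fact p.Prime := ⟨hp⟩
  haveI : NeZero p := ⟨hp.ne_zero⟩
  obtain ⟨φ, hfib, hmom⟩ := exists_good_dir h5 A hA
  exact key hp h5 A hA φ hfib hmom
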